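/- arXiv:2108.02459 — 4 statements merged into one kernel-verified Lean document; each statement's English description precedes it below -/
import Mathlib

section
/- Let d ≥ 1 and let Z be a closed subset of B̂^1 = [-1/3, 1/3]. If Z contains at least d+1 distinct points, then RG_d(Z) ≥ (d+1)!/2^{d+1}. If Z consists of at most d points, then RG_d(Z) = 0. -/
/-!
If `f` vanishes at `d + 1` points `zᵢ ∈ [-1, 1]`, the interpolation error formula gives
`f x = f⁽ᵈ⁺¹⁾(ξ) / (d + 1)! * ∏ (x - zᵢ)` with `ξ ∈ [-1, 1]`, and `|x - zᵢ| ≤ 2`; hence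
`1 = M₀(f) ≤ M_{d+1}(f) 2^{d+1} / (d + 1)!`. If `Z` has at most `d` points, the polynomial
`∏_{z ∈ Z} (x - z)`, normalized by its maximum on `[-1, 1]`, lies in `U_d(Z)` and has vanishing
`(d + 1)`-st derivative.
-/

open scoped RealInnerProductSpace
noncomputable section

/-- Euclidean space ℝ^n. -/
abbrev En (n : ℕ) := EuclideanSpace ℝ (Fin n)

/-- Maximum of absolute values of all partial derivatives of order `l` of `f` at `z`. -/
def partialMax (n l : ℕ) (f : En n → ℝ) (z : En n) : ℝ :=
  ⨆ α : Fin l → Fin n,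
    |iteratedFDeriv ℝ l f z (fun j => EuclideanSpace.single (α j) (1 : ℝ))|

/-- `M_l(f)`: sup over the closed unit ball of the max partial derivative of order `l`. -/
def Ml (n l : ℕ) (f : En n → ℝ) : ℝ :=
  ⨆ z : Metric.closedBall (0 : En n) 1, partialMax n l f (z : En n)

/-- The class `U_d(Z)` of normalized `C^{d+1}` functions vanishing on `Z`. -/
def Ud (n d : ℕ) (Z : Set (En n)) : Set (En n → ℝ) :=
  {f | ContDiff ℝ (d + 1 : ℕ) f ∧ (∀ z ∈ Z, f z = 0) ∧ Ml n 0 f = 1}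

/-- The `d`-rigidity `RG_d(Z)`. -/
def RG (n d : ℕ) (Z : Set (En n)) : ℝ :=
  sInf (Ml n (d + 1) '' Ud n d Z)

/-- `‖d^k ω(t)‖`: max over coordinates of the `k`-th derivative of the curve `ω` at `t`. -/
def curveDer (n k : ℕ) (ω : ℝ → En n) (t : ℝ) : ℝ :=
  ⨆ i : Fin n, |iteratedDeriv k ω t i|

/-- `ν_d(ω,t)`: max over `2 ≤ k ≤ d+1` of `‖d^k ω(t)‖`. -/
def nuAt (n d : ℕ) (ω : ℝ → En n) (t : ℝ) : ℝ :=
  ⨆ k : {k : ℕ // 2 ≤ k ∧ k ≤ d + 1}, curveDer n (k : ℕ) ω t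

/-- `ν_d(ω)`: max over `t ∈ [-1,1]` of `ν_d(ω,t)`. -/
def nuCurve (n d : ℕ) (ω : ℝ → En n) : ℝ :=
  ⨆ t : Set.Icc (-1 : ℝ) 1, nuAt n d ω (t : ℝ)

/-- `M_k(ω)`: max over `t ∈ [-1,1]` of `‖d^k ω(t)‖`. -/
def Mkc (n k : ℕ) (ω : ℝ → En n) : ℝ :=
  ⨆ t : Set.Icc (-1 : ℝ) 1, curveDer n k ω (t : ℝ)

/-- Membership in the family `Ω_d(Z,z₀)` of admissible curves. -/
def InOmega (n d : ℕ) (Z : Set (En n)) (z₀ : En n) (ω : ℝ → En n) : Prop :=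
  ContDiff ℝ (d + 1 : ℕ) ω ∧
  (∀ t ∈ Set.Icc (-1 : ℝ) 1, ω t ∈ Metric.closedBall (0 : En n) 1) ∧
  (∃ t ∈ Set.Icc (-1 : ℝ) 1, ω t = z₀) ∧
  (∃ z : Fin (d + 1) → En n, Function.Injective z ∧
    ∀ j, z j ∈ Z ∧ ∃ t ∈ Set.Icc (-1 : ℝ) 1, ω t = z j) ∧
  (∀ t ∈ Set.Icc (-1 : ℝ) 1, 0 < curveDer n 1 ω t ∧ curveDer n 1 ω t ≤ 1) ∧
  nuCurve n d ω ≤ 1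

/-- Pointwise `d`-thickness `ν_d(Z,z₀)`. -/
def nuZpt (n d : ℕ) (Z : Set (En n)) (z₀ : En n) : ℝ :=
  sInf (nuCurve n d '' {ω | InOmega n d Z z₀ ω})

/-- `d`-thickness `ν_d(Z)`. -/
def nuZ (n d : ℕ) (Z : Set (En n)) : ℝ :=
  ⨆ z₀ : Metric.sphere (0 : En n) 1, nuZpt n d Z (z₀ : En n)

/-- Sup of `|P|` over a set `S`. -/
def polySup (n : ℕ) (P : MvPolynomial (Fin n) ℝ) (S : Set (En n)) : ℝ :=
  ⨆ x : S, |MvPolynomial.eval (fun i => (x : En n) i) P|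

/-- The Remez constant `R_d(Z)` (value in `[1,∞]`). -/
def Remez (n d : ℕ) (Z : Set (En n)) : ENNReal :=
  sInf {K : ENNReal | 1 ≤ K ∧ ∀ P : MvPolynomial (Fin n) ℝ, P.totalDegree ≤ d →
    ENNReal.ofReal (polySup n P (Metric.closedBall (0 : En n) 1)) ≤
      K * ENNReal.ofReal (polySup n P Z)}

/-- The inverse Remez constant `R̂_d(Z) = 1/R_d(Z)` (zero when `R_d(Z) = ∞`). -/
def invRemez (n d : ℕ) (Z : Set (En n)) : ℝ :=
  ((Remez n d Z)⁻¹).toReal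

/-- The closed axis-parallel grid `ε`-cube with index `α`. -/
def gridCube (n : ℕ) (ε : ℝ) (α : Fin n → ℤ) : Set (En n) :=
  {x | ∀ i, (α i : ℝ) * ε ≤ x i ∧ x i ≤ ((α i : ℝ) + 1) * ε}

/-- The covering number `M(ε,Z)`: the number of grid `ε`-cubes meeting `Z`. -/
def covNum (n : ℕ) (ε : ℝ) (Z : Set (En n)) : ℕ :=
  Set.ncard {α : Fin n → ℤ | (gridCube n ε α ∩ Z).Nonempty}

/-- Box (entropy) dimension of `Z`. -/
def dimE (n : ℕ) (Z : Set (En n)) : ℝ :=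
  Filter.limsup (fun ε : ℝ => Real.log (covNum n ε Z) / Real.log (1 / ε))
    (nhdsWithin 0 (Set.Ioi 0))

/-- The straight line through `z₀` with direction `v`. -/
def lineThrough (n : ℕ) (z₀ v : En n) : Set (En n) :=
  {x | ∃ t : ℝ, x = z₀ + t • v}

/-- Orthogonal projection of `p` onto the line through `z₀` with unit direction `v`. -/
def projLine (n : ℕ) (z₀ v p : En n) : En n :=
  z₀ + (inner ℝ (p - z₀) v : ℝ) • v

/-- Distance from `p` to the line through `z₀` with unit direction `v`. -/
def distLine (n : ℕ) (z₀ v p : En n) : ℝ :=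
  dist p (projLine n z₀ v p)

/-- `ρ(ℓ,𝒵)`: max distance of the `d+1` points to the line. -/
def rhoLine (n d : ℕ) (z₀ v : En n) (z : Fin (d + 1) → En n) : ℝ :=
  ⨆ i, distLine n z₀ v (z i)

/-- `κ(ℓ,𝒵)`: min distance between projections of the `d+1` points onto the line. -/
def kappaLine (n d : ℕ) (z₀ v : En n) (z : Fin (d + 1) → En n) : ℝ :=
  ⨅ p : {q : Fin (d + 1) × Fin (d + 1) // q.1 ≠ q.2},
    dist (projLine n z₀ v (z (p : Fin (d + 1) × Fin (d + 1)).1))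
      (projLine n z₀ v (z (p : Fin (d + 1) × Fin (d + 1)).2))

/-- Pointwise approximate `ad`-thickness `ν̄_d(Z,z₀)`. -/
def barNuZpt (n d : ℕ) (Z : Set (En n)) (z₀ : En n) : ℝ :=
  sInf {m : ℝ | ∃ v : En n, ‖v‖ = 1 ∧
    (lineThrough n z₀ v ∩ Metric.closedBall (0 : En n) (1 / 3)).Nonempty ∧
    ∃ z : Fin (d + 1) → En n, Function.Injective z ∧ (∀ i, z i ∈ Z) ∧
      m = rhoLine n d z₀ v z / (kappaLine n d z₀ v z) ^ d}

/-- Approximate `ad`-thickness `ν̄_d(Z)`. -/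
def barNuZ (n d : ℕ) (Z : Set (En n)) : ℝ :=
  ⨆ z₀ : Metric.sphere (0 : En n) 1, barNuZpt n d Z (z₀ : En n)

/-- The axis-parallel cube with corner `a` and side `s`. -/
def cube (n : ℕ) (a : En n) (s : ℝ) : Set (En n) :=
  {x | ∀ i, a i ≤ x i ∧ x i ≤ a i + s}

/-- `Z` is `h`-dense in the cube with corner `a` and side `s`. -/
def hDense (n : ℕ) (a : En n) (s h : ℝ) (Z : Set (En n)) : Prop :=
  ∀ b : En n, (∀ i, a i ≤ b i ∧ b i + h ≤ a i + s) → (Z ∩ cube n b h).Nonempty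

/-- `μ_d(f,z)`: max over `1 ≤ k ≤ d` of the order-`k` partial derivatives of `f` at `z`. -/
def muF (n d : ℕ) (f : En n → ℝ) (z : En n) : ℝ :=
  ⨆ k : {k : ℕ // 1 ≤ k ∧ k ≤ d}, partialMax n (k : ℕ) f z

/-- `μ_d(f)`: max over the unit ball of `μ_d(f,z)`. -/
def muFglob (n d : ℕ) (f : En n → ℝ) : ℝ :=
  ⨆ z : Metric.closedBall (0 : En n) 1, muF n d f (z : En n)

/-- `M_m(g)` for a function of one variable on `[-1,1]`. -/
def MIcc (m : ℕ) (g : ℝ → ℝ) : ℝ :=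
  ⨆ t : Set.Icc (-1 : ℝ) 1, |iteratedDeriv m g (t : ℝ)|

end
/-- `M_l(f)` for `f` on `B^1 = [-1,1]`. -/
noncomputable def Ml1 (l : ℕ) (f : ℝ → ℝ) : ℝ :=
  ⨆ x : Set.Icc (-1 : ℝ) 1, |iteratedDeriv l f (x : ℝ)|

/-- `U_d(Z)` for `Z ⊆ B̂^1`. -/
def Ud1 (d : ℕ) (Z : Set ℝ) : Set (ℝ → ℝ) :=
  {f | ContDiff ℝ (d + 1 : ℕ) f ∧ (∀ z ∈ Z, f z = 0) ∧ Ml1 0 f = 1}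

/-- `d`-rigidity in dimension one. -/
noncomputable def RG1 (d : ℕ) (Z : Set ℝ) : ℝ :=
  sInf (Ml1 (d + 1) '' Ud1 d Z)

open Polynomial Set Nat

lemma Polynomial.contDiff_eval (p : ℝ[X]) (n : WithTop ℕ∞) : ContDiff ℝ n fun x => p.eval x := by
  simpa [coe_aeval_eq_eval] using p.contDiff_aeval (R := ℝ) (𝕜 := ℝ) n

lemma Polynomial.iterate_deriv_eval (p : ℝ[X]) (n : ℕ) :
    deriv^[n] (fun x => p.eval x) = fun x => (derivative^[n] p).eval x := by
  induction n generalizing p with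
  | zero => rfl
  | succ n ih =>
    have hderiv : deriv (fun x => p.eval x) = fun x => p.derivative.eval x :=
      _root_.funext fun _ => p.deriv
    rw [Function.iterate_succ_apply, Function.iterate_succ_apply, ← ih p.derivative, hderiv]

lemma Polynomial.iteratedDeriv_eval_of_natDegree_le {p : ℝ[X]} {n : ℕ} (hp : p.natDegree ≤ n)
    (x : ℝ) : iteratedDeriv n (fun x => p.eval x) x = n ! * p.coeff n := by
  have hconst : (derivative^[n] p).natDegree = 0 := by
    have := p.natDegree_iterate_derivative n
    omega
  simp only [iteratedDeriv_eq_iterate, p.iterate_deriv_eval]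
  rw [eq_C_of_natDegree_eq_zero hconst, eval_C,
    coeff_iterate_derivative, zero_add, Nat.descFactorial_self, nsmul_eq_mul]

lemma Polynomial.iteratedDeriv_eval_of_natDegree_lt {p : ℝ[X]} {n : ℕ} (hp : p.natDegree < n)
    (x : ℝ) : iteratedDeriv n (fun x => p.eval x) x = 0 := by
  simp only [iteratedDeriv_eq_iterate, p.iterate_deriv_eval, iterate_derivative_eq_zero hp,
    eval_zero]

theorem exists_iteratedDeriv_eq_zero {n : ℕ} {g : ℝ → ℝ} (hg : ContDiff ℝ n g) {S : Finset ℝ}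
    (hcard : S.card = n + 1) (hgS : ∀ s ∈ S, g s = 0) {a b : ℝ} (hS : ↑S ⊆ Icc a b) :
    ∃ ξ ∈ Icc a b, iteratedDeriv n g ξ = 0 := by
  induction n generalizing g S with
  | zero =>
    obtain ⟨s, rfl⟩ := Finset.card_eq_one.1 hcard
    have hs := Finset.mem_singleton_self s
    exact ⟨s, hS hs, by simpa using hgS s hs⟩
  | succ n ih =>
    set t := S.orderEmbOfFin hcard
    have ht : ∀ i, t i ∈ S := S.orderEmbOfFin_mem hcard
    have hrolle (i : Fin (n + 1)) : ∃ ξ ∈ Ioo (t i.castSucc) (t i.succ), deriv g ξ = 0 :=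
      exists_deriv_eq_zero (t.strictMono (Fin.castSucc_lt_succ (i := i)))
        (hg.continuous.continuousOn) (by rw [hgS _ (ht _), hgS _ (ht _)])
    choose ξ hξ hξ0 using hrolle
    have hξmono : StrictMono ξ := Fin.strictMono_iff_lt_succ.2 fun i =>
      (hξ i.castSucc).2.trans_le ((Fin.succ_castSucc i).symm ▸ (hξ i.succ).1.le)
    have hg' : ContDiff ℝ n (deriv g) :=
      (contDiff_succ_iff_deriv.1 (by exact_mod_cast hg)).2.2
    obtain ⟨c, hc, hc0⟩ := ih hg' (S := Finset.univ.image ξ)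
      (by rw [Finset.card_image_of_injective _ hξmono.injective, Finset.card_fin])
      (by simpa using hξ0)
      (by
        simp only [Finset.coe_image, Finset.coe_univ, image_univ, range_subset_iff]
        exact fun i => ⟨(hS (ht _)).1.trans (hξ i).1.le, (hξ i).2.le.trans (hS (ht _)).2⟩)
    exact ⟨c, hc, by rwa [iteratedDeriv_succ']⟩

/-- The error formula of polynomial interpolation at the nodes `S`. -/
theorem exists_mul_factorial_eq_iteratedDeriv_mul_prod {n : ℕ} {f : ℝ → ℝ} (hf : ContDiff ℝ n f)
    {S : Finset ℝ} (hcard : S.card = n) (hfS : ∀ s ∈ S, f s = 0) {a b x : ℝ}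
    (hS : ↑S ⊆ Icc a b) (hx : x ∈ Icc a b) :
    ∃ ξ ∈ Icc a b, f x * n ! = iteratedDeriv n f ξ * ∏ s ∈ S, (x - s) := by
  by_cases hxS : x ∈ S
  · exact ⟨x, hx, by rw [hfS x hxS, Finset.prod_eq_zero hxS (sub_self x)]; ring⟩
  set P : ℝ[X] := ∏ s ∈ S, (X - C s)
  have hPeval (y : ℝ) : P.eval y = ∏ s ∈ S, (y - s) := by simp [P, eval_prod]
  have hPx : P.eval x ≠ 0 := by
    rw [hPeval]
    exact Finset.prod_ne_zero_iff.2 fun s hs => sub_ne_zero.2 (ne_of_mem_of_not_mem hs hxS).symm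
  have hPdeg : P.natDegree = n := by rw [natDegree_finsetProd_X_sub_C_eq_card, hcard]
  have hPlead : P.coeff n = 1 := by
    rw [← hPdeg]
    exact (monic_prod_of_monic _ _ fun s _ => monic_X_sub_C s).leadingCoeff
  set lam := f x / P.eval x with hlam
  -- `lam` makes `g` vanish at `x` as well as on `S`; iterated Rolle then gives `ξ`.
  set g : ℝ → ℝ := fun y => f y - lam * P.eval y
  have hg : ContDiff ℝ n g := hf.sub (contDiff_const.mul (P.contDiff_eval n))
  have hgS : ∀ s ∈ insert x S, g s = 0 := by
    intro s hs
    rcases Finset.mem_insert.1 hs with rfl | hs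
    · simp only [g, lam, div_mul_cancel₀ _ hPx, sub_self]
    · simp only [g, hfS s hs, hPeval, Finset.prod_eq_zero hs (sub_self s), mul_zero, sub_zero]
  obtain ⟨ξ, hξ, hξ0⟩ := exists_iteratedDeriv_eq_zero hg
    (by rw [Finset.card_insert_of_notMem hxS, hcard]) hgS
    (by rw [Finset.coe_insert]; exact insert_subset hx hS)
  have hfξ : iteratedDeriv n f ξ = lam * n ! := by
    rw [iteratedDeriv_fun_sub hf.contDiffAt (contDiff_const.mul (P.contDiff_eval n)).contDiffAt,
      iteratedDeriv_const_mul_field, iteratedDeriv_eval_of_natDegree_le hPdeg.le, hPlead,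
      sub_eq_zero] at hξ0
    rw [hξ0, mul_one]
  refine ⟨ξ, hξ, ?_⟩
  rw [hfξ, ← hPeval, mul_right_comm, hlam, div_mul_cancel₀ _ hPx]

instance : Nonempty (Icc (-1 : ℝ) 1) := ⟨⟨0, by norm_num⟩⟩

lemma Ml1_nonneg (l : ℕ) (f : ℝ → ℝ) : 0 ≤ Ml1 l f :=
  Real.iSup_nonneg fun _ => abs_nonneg _

lemma Ml1_le {l : ℕ} {f : ℝ → ℝ} {c : ℝ} (h : ∀ x ∈ Icc (-1 : ℝ) 1, |iteratedDeriv l f x| ≤ c) :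
    Ml1 l f ≤ c :=
  ciSup_le fun x => h x x.2

lemma abs_iteratedDeriv_le_Ml1 {l : ℕ} {f : ℝ → ℝ} (hf : ContDiff ℝ l f) {x : ℝ}
    (hx : x ∈ Icc (-1 : ℝ) 1) : |iteratedDeriv l f x| ≤ Ml1 l f := by
  obtain ⟨C, hC⟩ := isCompact_Icc.exists_bound_of_continuousOn
    (hf.continuous_iteratedDeriv l le_rfl).continuousOn
  exact le_ciSup ⟨C, by rintro _ ⟨y, rfl⟩; exact hC y y.2⟩ (⟨x, hx⟩ : Icc (-1 : ℝ) 1)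

lemma Ml1_const_mul (l : ℕ) (c : ℝ) (f : ℝ → ℝ) :
    Ml1 l (fun x => c * f x) = |c| * Ml1 l f := by
  simp only [Ml1, iteratedDeriv_const_mul_field, abs_mul, Real.mul_iSup_of_nonneg (abs_nonneg c)]

lemma Polynomial.Ml1_eval_eq_zero {p : ℝ[X]} {l : ℕ} (hp : p.natDegree < l) :
    Ml1 l (fun x => p.eval x) = 0 := by
  simp [Ml1, iteratedDeriv_eval_of_natDegree_lt hp]

lemma Polynomial.Ml1_zero_eval_pos {p : ℝ[X]} (hp : p ≠ 0) : 0 < Ml1 0 (fun x => p.eval x) := by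
  obtain ⟨x, hx, hpx⟩ : ∃ x ∈ Icc (-1 : ℝ) 1, p.eval x ≠ 0 := by
    by_contra! h
    exact hp (eq_zero_of_infinite_isRoot p ((Icc_infinite (by norm_num)).mono h))
  exact (abs_pos.2 hpx).trans_le (by simpa using abs_iteratedDeriv_le_Ml1 (p.contDiff_eval 0) hx)

theorem abs_le_Ml1_mul_two_pow_div_factorial {n : ℕ} {f : ℝ → ℝ} (hf : ContDiff ℝ n f)
    {S : Finset ℝ} (hcard : S.card = n) (hfS : ∀ s ∈ S, f s = 0) (hS : ↑S ⊆ Icc (-1 : ℝ) 1)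
    {x : ℝ} (hx : x ∈ Icc (-1 : ℝ) 1) : |f x| ≤ Ml1 n f * 2 ^ n / n ! := by
  obtain ⟨ξ, hξ, hfx⟩ := exists_mul_factorial_eq_iteratedDeriv_mul_prod hf hcard hfS hS hx
  have hprod : |∏ s ∈ S, (x - s)| ≤ 2 ^ n := by
    rw [Finset.abs_prod, ← hcard, ← Finset.prod_const]
    refine Finset.prod_le_prod (fun _ _ => abs_nonneg _) fun s hs => ?_
    have hs := hS hs
    rw [abs_le]
    constructor <;> linarith [hx.1, hx.2, hs.1, hs.2]
  rw [le_div_iff₀ (by positivity), ← abs_of_pos (by positivity : (0 : ℝ) < n !), ← abs_mul, hfx,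
    abs_mul]
  exact mul_le_mul (abs_iteratedDeriv_le_Ml1 hf hξ) hprod (abs_nonneg _) (Ml1_nonneg _ _)

theorem Ud1_nonempty {d : ℕ} {Z : Set ℝ} {c : ℝ} (hc : c < 1) (hZ : Z ⊆ Iic c) :
    (Ud1 d Z).Nonempty := by
  have hsmooth : ContDiff ℝ (d + 1 : ℕ) Real.smoothTransition := by
    exact_mod_cast Real.smoothTransition.contDiff (n := (d + 1 : ℕ))
  have hf : ContDiff ℝ (d + 1 : ℕ) fun x => Real.smoothTransition ((x - c) / (1 - c)) :=
    hsmooth.comp ((contDiff_id.sub contDiff_const).div_const _)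
  refine ⟨_, hf, fun z hz => Real.smoothTransition.zero_of_nonpos ?_, ?_⟩
  · exact div_nonpos_of_nonpos_of_nonneg (sub_nonpos.2 (hZ hz)) (sub_pos.2 hc).le
  · refine le_antisymm (Ml1_le fun x _ => ?_) ?_
    · rw [iteratedDeriv_zero, abs_of_nonneg (Real.smoothTransition.nonneg _)]
      exact Real.smoothTransition.le_one _
    · have h1 := abs_iteratedDeriv_le_Ml1 (l := 0) (hf.of_le (by norm_num))
        (by norm_num : (1 : ℝ) ∈ Icc (-1 : ℝ) 1)
      rwa [iteratedDeriv_zero, div_self (sub_pos.2 hc).ne', Real.smoothTransition.one,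
        abs_one] at h1

theorem factorial_div_two_pow_le_RG1 {d : ℕ} {Z : Set ℝ} (hne : (Ud1 d Z).Nonempty)
    {S : Finset ℝ} (hSZ : ↑S ⊆ Z) (hS : ↑S ⊆ Icc (-1 : ℝ) 1) (hcard : S.card = d + 1) :
    ((d + 1) ! : ℝ) / 2 ^ (d + 1) ≤ RG1 d Z := by
  refine le_csInf (hne.image _) ?_
  rintro _ ⟨f, ⟨hf, hfZ, hf0⟩, rfl⟩
  have hbound : Ml1 0 f ≤ Ml1 (d + 1) f * 2 ^ (d + 1) / (d + 1) ! := Ml1_le fun x hx => by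
    simpa using abs_le_Ml1_mul_two_pow_div_factorial hf hcard (fun s hs => hfZ s (hSZ hs)) hS hx
  rw [hf0, le_div_iff₀ (by positivity), one_mul] at hbound
  rwa [div_le_iff₀ (by positivity)]

theorem RG1_eq_zero_of_ncard_le {d : ℕ} {Z : Set ℝ} (hZ : Z.Finite) (hcard : Z.ncard ≤ d) :
    RG1 d Z = 0 := by
  set P : ℝ[X] := ∏ s ∈ hZ.toFinset, (X - C s)
  have hPdeg : P.natDegree < d + 1 := by
    rw [natDegree_finsetProd_X_sub_C_eq_card, ← Set.ncard_eq_toFinset_card Z hZ]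
    omega
  have hP0 : 0 < Ml1 0 (fun x => P.eval x) :=
    Ml1_zero_eval_pos (monic_prod_of_monic _ _ fun s _ => monic_X_sub_C s).ne_zero
  set f : ℝ → ℝ := fun x => (Ml1 0 fun x => P.eval x)⁻¹ * P.eval x
  have hf : f ∈ Ud1 d Z := by
    refine ⟨contDiff_const.mul (P.contDiff_eval _), fun z hz => ?_, ?_⟩
    · simp [f, P, eval_prod, Finset.prod_eq_zero (hZ.mem_toFinset.2 hz)]
    · rw [Ml1_const_mul, abs_inv, abs_of_pos hP0, inv_mul_cancel₀ hP0.ne']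
  have hf' : Ml1 (d + 1) f = 0 := by rw [Ml1_const_mul, Ml1_eval_eq_zero hPdeg, mul_zero]
  refine IsLeast.csInf_eq ⟨⟨f, hf, hf'⟩, ?_⟩
  rintro _ ⟨g, -, rfl⟩
  exact Ml1_nonneg _ _

theorem stmt2_general (d : ℕ) (Z : Set ℝ)
    (hZ : Z ⊆ Set.Icc (-(1 / 3) : ℝ) (1 / 3)) :
    ((∃ S : Finset ℝ, (S : Set ℝ) ⊆ Z ∧ S.card = d + 1) →
      (Nat.factorial (d + 1) : ℝ) / 2 ^ (d + 1) ≤ RG1 d Z) ∧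
    (Z.Finite → Z.ncard ≤ d → RG1 d Z = 0) := by
  refine ⟨fun ⟨S, hSZ, hcard⟩ => ?_, RG1_eq_zero_of_ncard_le⟩
  have hZ1 : Z ⊆ Icc (-1 : ℝ) 1 := hZ.trans (Icc_subset_Icc (by norm_num) (by norm_num))
  exact factorial_div_two_pow_le_RG1
    (Ud1_nonempty (by norm_num : (1 / 3 : ℝ) < 1) fun z hz => (hZ hz).2) hSZ (hSZ.trans hZ1) hcard

/-- for closed `Z ⊆ [-1/3,1/3]`: if `Z` has at least `d+1` points then
`RG_d(Z) ≥ (d+1)!/2^{d+1}`; if `Z` has at most `d` points then `RG_d(Z) = 0`. -/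
theorem stmt2 (d : ℕ) (hd : 1 ≤ d) (Z : Set ℝ) (hZc : IsClosed Z)
    (hZ : Z ⊆ Set.Icc (-(1 / 3) : ℝ) (1 / 3)) :
    ((∃ S : Finset ℝ, (S : Set ℝ) ⊆ Z ∧ S.card = d + 1) →
      (Nat.factorial (d + 1) : ℝ) / 2 ^ (d + 1) ≤ RG1 d Z) ∧
    (Z.Finite → Z.ncard ≤ d → RG1 d Z = 0) :=
  stmt2_general d Z hZ
end

section
/- Let n ≥ 1 and d ≥ 1 be integers. There exist constants C_1 = C_1(n,d) > 0 and C_2 = C_2(n,d) > 0, depending only on n and d, with the following property: for every C^{d+1} function f on B^n and every C^{d+1} curve ω : [-1,1] → B^n satisfying 0 < ‖dω(t)‖ ≤ 1 for all t ∈ [-1,1] and ν_d(ω) ≤ 1, setting g(t) = f(ω(t)), for each t ∈ [-1,1] one has ‖d^{d+1} f(ω(t))‖ ≥ (C_1 / ‖ω'(t)‖^{d+1}) · ( |g^{(d+1)}(t)| − C_2 · μ_d(f, ω(t)) · ν_d(ω, t) ). -/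
open scoped RealInnerProductSpace
/-! By Faà di Bruno, `g^{(d+1)}(t)` is the sum, over the ordered partitions `c` of
`{0, …, d}`, of `d^{|c|} f(ω t)` applied to the derivatives `ω^{(|c_i|)}(t)` of the curve
indexed by the blocks `c_i`. Expanding these vectors in coordinates bounds such a term by
`n^{|c|} ‖d^{|c|} f‖ ∏ᵢ ‖d^{|c_i|} ω‖`. For the partition into singletons this is
`n^{d+1} ‖d^{d+1} f‖ ‖ω'‖^{d+1}`; every other partition has at most `d` blocks and a block of
size `≥ 2`, and as all factors `‖d^k ω‖` are at most `1`, its term is at most `n^d μ_d ν_d`.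
Summing over the `N` ordered partitions and solving for `‖d^{d+1} f‖` gives the theorem with
`C₁ = 1 / (N n^{d+1})` and `C₂ = N n^d`. -/

open Finset

instance (a b : ℕ) : Finite {k : ℕ // a ≤ k ∧ k ≤ b} := (Set.finite_Icc a b).to_subtype

section Suprema

variable {n : ℕ}

lemma partialMax_nonneg (l : ℕ) (f : En n → ℝ) (z : En n) : 0 ≤ partialMax n l f z :=
  Real.iSup_nonneg fun _ ↦ abs_nonneg _

lemma curveDer_nonneg (k : ℕ) (ω : ℝ → En n) (t : ℝ) : 0 ≤ curveDer n k ω t :=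
  Real.iSup_nonneg fun _ ↦ abs_nonneg _

lemma nuAt_nonneg (d : ℕ) (ω : ℝ → En n) (t : ℝ) : 0 ≤ nuAt n d ω t :=
  Real.iSup_nonneg fun _ ↦ curveDer_nonneg _ _ _

lemma muF_nonneg (d : ℕ) (f : En n → ℝ) (z : En n) : 0 ≤ muF n d f z :=
  Real.iSup_nonneg fun _ ↦ partialMax_nonneg _ _ _

lemma abs_iteratedFDeriv_single_le_partialMax (l : ℕ) (f : En n → ℝ) (z : En n)
    (α : Fin l → Fin n) :
    |iteratedFDeriv ℝ l f z (fun j ↦ EuclideanSpace.single (α j) (1 : ℝ))| ≤ partialMax n l f z :=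
  Finite.le_ciSup (fun β : Fin l → Fin n ↦
    |iteratedFDeriv ℝ l f z fun j ↦ EuclideanSpace.single (β j) (1 : ℝ)|) α

lemma abs_iteratedDeriv_apply_le_curveDer (k : ℕ) (ω : ℝ → En n) (t : ℝ) (i : Fin n) :
    |iteratedDeriv k ω t i| ≤ curveDer n k ω t :=
  Finite.le_ciSup (fun j ↦ |iteratedDeriv k ω t j|) i

lemma curveDer_le_norm (k : ℕ) (ω : ℝ → En n) (t : ℝ) :
    curveDer n k ω t ≤ ‖iteratedDeriv k ω t‖ :=
  Real.iSup_le (fun i ↦ PiLp.norm_apply_le (iteratedDeriv k ω t) i) (norm_nonneg _)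

lemma curveDer_le_nuAt {d k : ℕ} (ω : ℝ → En n) (t : ℝ) (h2k : 2 ≤ k) (hkd : k ≤ d + 1) :
    curveDer n k ω t ≤ nuAt n d ω t :=
  Finite.le_ciSup (fun k : {k : ℕ // 2 ≤ k ∧ k ≤ d + 1} ↦ curveDer n k ω t) ⟨k, h2k, hkd⟩

lemma partialMax_le_muF {d k : ℕ} (f : En n → ℝ) (z : En n) (h1k : 1 ≤ k) (hkd : k ≤ d) :
    partialMax n k f z ≤ muF n d f z :=
  Finite.le_ciSup (fun k : {k : ℕ // 1 ≤ k ∧ k ≤ d} ↦ partialMax n k f z) ⟨k, h1k, hkd⟩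

lemma nuAt_le_sum_norm_iteratedDeriv (d : ℕ) (ω : ℝ → En n) (t : ℝ) :
    nuAt n d ω t ≤ ∑ k ∈ range (d + 2), ‖iteratedDeriv k ω t‖ := by
  refine Real.iSup_le (fun ⟨k, _, hkd⟩ ↦ (curveDer_le_norm k ω t).trans ?_)
    (sum_nonneg fun _ _ ↦ norm_nonneg _)
  exact single_le_sum (f := fun k ↦ ‖iteratedDeriv k ω t‖) (fun _ _ ↦ norm_nonneg _)
    (mem_range.2 (by omega))

lemma nuAt_le_nuCurve {d : ℕ} {ω : ℝ → En n} (hω : ContDiff ℝ (d + 1 : ℕ) ω) {t : ℝ}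
    (ht : t ∈ Set.Icc (-1 : ℝ) 1) : nuAt n d ω t ≤ nuCurve n d ω := by
  have hcont : Continuous fun s ↦ ∑ k ∈ range (d + 2), ‖iteratedDeriv k ω s‖ :=
    continuous_finsetSum _ fun k hk ↦
      (hω.continuous_iteratedDeriv k (by norm_cast; have := mem_range.1 hk; omega)).norm
  obtain ⟨C, hC⟩ := (isCompact_Icc (a := (-1 : ℝ)) (b := 1)).bddAbove_image hcont.continuousOn
  refine le_ciSup (f := fun s : Set.Icc (-1 : ℝ) 1 ↦ nuAt n d ω s) ⟨C, ?_⟩ ⟨t, ht⟩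
  rintro _ ⟨s, rfl⟩
  exact (nuAt_le_sum_norm_iteratedDeriv d ω s).trans (hC ⟨s, s.2, rfl⟩)

end Suprema

lemma EuclideanSpace.sum_apply_smul_single {n : ℕ} (v : En n) :
    ∑ j, v j • EuclideanSpace.single j (1 : ℝ) = v := by
  simpa using (EuclideanSpace.basisFun (Fin n) ℝ).sum_repr v

lemma abs_iteratedFDeriv_apply_le {n k : ℕ} (f : En n → ℝ) (x : En n) (u : Fin k → En n)
    (b : Fin k → ℝ) (hb : ∀ i j, |u i j| ≤ b i) :
    |iteratedFDeriv ℝ k f x u| ≤ (n : ℝ) ^ k * partialMax n k f x * ∏ i, b i := by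
  set e : Fin n → En n := fun j ↦ EuclideanSpace.single j 1
  have hexpand : iteratedFDeriv ℝ k f x u =
      ∑ r : Fin k → Fin n, (∏ i, u i (r i)) • iteratedFDeriv ℝ k f x (fun i ↦ e (r i)) := by
    conv_lhs => rw [← funext fun i ↦ EuclideanSpace.sum_apply_smul_single (u i)]
    rw [ContinuousMultilinearMap.map_sum]
    exact sum_congr rfl fun r _ ↦ ContinuousMultilinearMap.map_smul_univ _ _ _
  have hterm (r : Fin k → Fin n) :
      |(∏ i, u i (r i)) • iteratedFDeriv ℝ k f x (fun i ↦ e (r i))| ≤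
        (∏ i, b i) * partialMax n k f x := by
    have hprod : |∏ i, u i (r i)| ≤ ∏ i, b i := by
      rw [abs_prod]
      exact prod_le_prod (fun i _ ↦ abs_nonneg _) (fun i _ ↦ hb i (r i))
    rw [smul_eq_mul, abs_mul]
    exact mul_le_mul hprod (abs_iteratedFDeriv_single_le_partialMax k f x r) (abs_nonneg _)
      ((abs_nonneg _).trans hprod)
  calc |iteratedFDeriv ℝ k f x u|
      ≤ ∑ r : Fin k → Fin n, |(∏ i, u i (r i)) • iteratedFDeriv ℝ k f x (fun i ↦ e (r i))| := by
        rw [hexpand]; exact abs_sum_le_sum_abs _ _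
    _ ≤ ∑ _r : Fin k → Fin n, (∏ i, b i) * partialMax n k f x := sum_le_sum fun r _ ↦ hterm r
    _ = (n : ℝ) ^ k * partialMax n k f x * ∏ i, b i := by
        simp only [sum_const, card_univ, Fintype.card_fun, Fintype.card_fin, nsmul_eq_mul]
        push_cast
        ring

namespace OrderedFinpartition

variable {m : ℕ} (c : OrderedFinpartition m)

lemma sum_partSize : ∑ i, c.partSize i = m := by
  simpa using c.sum_sigma_eq_sum (fun _ ↦ (1 : ℕ))

lemma length_lt_of_two_le_partSize {i : Fin c.length} (hi : 2 ≤ c.partSize i) : c.length < m := by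
  have : ∑ _j : Fin c.length, 1 < ∑ j, c.partSize j :=
    sum_lt_sum (fun j _ ↦ c.partSize_pos j) ⟨i, mem_univ i, hi⟩
  simpa [sum_partSize] using this

lemma length_eq_of_forall_partSize_eq_one (h : ∀ i, c.partSize i = 1) : c.length = m := by
  simpa [h] using c.sum_partSize

end OrderedFinpartition

lemma abs_faaDiBruno_term_le {n d : ℕ} (hn : 1 ≤ n) (f : En n → ℝ) (ω : ℝ → En n) (t : ℝ)
    (hω₁ : curveDer n 1 ω t ≤ 1) (hν : nuAt n d ω t ≤ 1) (c : OrderedFinpartition (d + 1)) :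
    |iteratedFDeriv ℝ c.length f (ω t) (fun i ↦ iteratedDeriv (c.partSize i) ω t)| ≤
      (n : ℝ) ^ (d + 1) * partialMax n (d + 1) f (ω t) * curveDer n 1 ω t ^ (d + 1) +
        (n : ℝ) ^ d * muF n d f (ω t) * nuAt n d ω t := by
  have hbase := abs_iteratedFDeriv_apply_le f (ω t) (fun i ↦ iteratedDeriv (c.partSize i) ω t)
    (fun i ↦ curveDer n (c.partSize i) ω t)
    (fun i j ↦ abs_iteratedDeriv_apply_le_curveDer _ ω t j)
  have hpM := partialMax_nonneg (d + 1) f (ω t)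
  have hμ := muF_nonneg d f (ω t)
  have hw := curveDer_nonneg 1 ω t
  have hν₀ := nuAt_nonneg d ω t
  by_cases hlarge : ∃ i, 2 ≤ c.partSize i
  · obtain ⟨i₀, hi₀⟩ := hlarge
    have hlen : c.length ≤ d := by have := c.length_lt_of_two_le_partSize hi₀; omega
    have hfactor_le_one (i : Fin c.length) : curveDer n (c.partSize i) ω t ≤ 1 := by
      by_cases hi : 2 ≤ c.partSize i
      · exact (curveDer_le_nuAt ω t hi (c.partSize_le i)).trans hν
      · rwa [show c.partSize i = 1 by have := c.partSize_pos i; omega]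
    have hprod : ∏ i, curveDer n (c.partSize i) ω t ≤ nuAt n d ω t := by
      refine le_trans ?_ (curveDer_le_nuAt ω t hi₀ (c.partSize_le i₀))
      simpa using prod_le_prod_of_subset_of_le_one (s := {i₀}) (subset_univ _)
        (fun i _ ↦ curveDer_nonneg _ ω t) (fun i _ _ ↦ hfactor_le_one i)
    have hpartial : partialMax n c.length f (ω t) ≤ muF n d f (ω t) :=
      partialMax_le_muF f (ω t) (c.length_pos (by omega)) hlen
    refine le_add_of_nonneg_of_le (by positivity) (hbase.trans ?_)
    gcongr
    · exact prod_nonneg fun i _ ↦ curveDer_nonneg _ ω t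
    · exact partialMax_nonneg _ f (ω t)
    · exact_mod_cast hn
  · push Not at hlarge
    have hone (i : Fin c.length) : c.partSize i = 1 := by
      have := c.partSize_pos i; have := hlarge i; omega
    have hlen := c.length_eq_of_forall_partSize_eq_one hone
    refine le_add_of_le_of_nonneg (hbase.trans (le_of_eq ?_)) (by positivity)
    simp only [hone, prod_const, card_univ, Fintype.card_fin, hlen]

lemma one_div_div_mul_sub_le {K W G B p : ℝ} (hK : 0 < K) (hW : 0 < W)
    (h : G ≤ K * p * W + B) : 1 / K / W * (G - B) ≤ p := by
  calc 1 / K / W * (G - B) ≤ 1 / K / W * (K * p * W) := by gcongr; linarith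
    _ = p := by field_simp

theorem stmt8_general (n d : ℕ) (hn : 1 ≤ n) :
    ∃ C₁ C₂ : ℝ, 0 < C₁ ∧ 0 < C₂ ∧
      ∀ f : En n → ℝ, ContDiff ℝ (d + 1 : ℕ) f →
        ∀ ω : ℝ → En n, ContDiff ℝ (d + 1 : ℕ) ω →
          (∀ t ∈ Set.Icc (-1 : ℝ) 1, ω t ∈ Metric.closedBall (0 : En n) 1) →
          (∀ t ∈ Set.Icc (-1 : ℝ) 1, 0 < curveDer n 1 ω t ∧ curveDer n 1 ω t ≤ 1) →
          nuCurve n d ω ≤ 1 →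
          ∀ t ∈ Set.Icc (-1 : ℝ) 1,
            partialMax n (d + 1) f (ω t) ≥
              C₁ / (curveDer n 1 ω t) ^ (d + 1) *
                (|iteratedDeriv (d + 1) (fun u => f (ω u)) t| -
                  C₂ * muF n d f (ω t) * nuAt n d ω t) := by
  set N : ℝ := (Fintype.card (OrderedFinpartition (d + 1)) : ℝ)
  have hN : 0 < N := Nat.cast_pos.2 Fintype.card_pos
  have hn₀ : (0 : ℝ) < n := by exact_mod_cast hn
  refine ⟨1 / (N * n ^ (d + 1)), N * n ^ d, by positivity, by positivity, ?_⟩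
  intro f hf ω hω _ hder hnu t ht
  have hw₀ := (hder t ht).1
  have hν := (nuAt_le_nuCurve hω ht).trans hnu
  have hsum : |iteratedDeriv (d + 1) (fun u => f (ω u)) t| ≤
      N * n ^ (d + 1) * partialMax n (d + 1) f (ω t) * curveDer n 1 ω t ^ (d + 1) +
        N * n ^ d * muF n d f (ω t) * nuAt n d ω t := by
    calc |iteratedDeriv (d + 1) (f ∘ ω) t|
        ≤ ∑ c : OrderedFinpartition (d + 1),
            |iteratedFDeriv ℝ c.length f (ω t) (fun i ↦ iteratedDeriv (c.partSize i) ω t)| := by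
          rw [iteratedDeriv_vcomp_eq_sum_orderedFinpartition hf.contDiffAt hω.contDiffAt le_rfl]
          exact abs_sum_le_sum_abs _ _
      _ ≤ ∑ _c : OrderedFinpartition (d + 1),
            ((n : ℝ) ^ (d + 1) * partialMax n (d + 1) f (ω t) * curveDer n 1 ω t ^ (d + 1) +
              (n : ℝ) ^ d * muF n d f (ω t) * nuAt n d ω t) :=
          sum_le_sum fun c _ ↦ abs_faaDiBruno_term_le hn f ω t (hder t ht).2 hν c
      _ = _ := by rw [sum_const, card_univ, nsmul_eq_mul]; ring
  exact one_div_div_mul_sub_le (by positivity) (by positivity) hsum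

/-- there are `C₁(n,d), C₂(n,d) > 0` such that for every `C^{d+1}` function `f`
on `B^n` and admissible curve `ω`, for each `t ∈ [-1,1]`,
`‖d^{d+1}f(ω(t))‖ ≥ (C₁/‖ω'(t)‖^{d+1})·(|g^{(d+1)}(t)| − C₂·μ_d(f,ω(t))·ν_d(ω,t))`. -/
theorem stmt8 (n d : ℕ) (hn : 1 ≤ n) (hd : 1 ≤ d) :
    ∃ C₁ C₂ : ℝ, 0 < C₁ ∧ 0 < C₂ ∧
      ∀ f : En n → ℝ, ContDiff ℝ (d + 1 : ℕ) f →
        ∀ ω : ℝ → En n, ContDiff ℝ (d + 1 : ℕ) ω →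
          (∀ t ∈ Set.Icc (-1 : ℝ) 1, ω t ∈ Metric.closedBall (0 : En n) 1) →
          (∀ t ∈ Set.Icc (-1 : ℝ) 1, 0 < curveDer n 1 ω t ∧ curveDer n 1 ω t ≤ 1) →
          nuCurve n d ω ≤ 1 →
          ∀ t ∈ Set.Icc (-1 : ℝ) 1,
            partialMax n (d + 1) f (ω t) ≥
              C₁ / (curveDer n 1 ω t) ^ (d + 1) *
                (|iteratedDeriv (d + 1) (fun u => f (ω u)) t| -
                  C₂ * muF n d f (ω t) * nuAt n d ω t) :=
  stmt8_general n d hn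
end

section
/- Let n ≥ 1 and d ≥ 1 be integers. There exist constants D_2, …, D_{d+1} > 0, each D_k depending only on k, with the following property: let z_1, …, z_{d+1} ∈ B̂^n be distinct points and z_0 ∈ S^{n-1}, and assume there is a straight line ℓ through z_0 such that (1) the distance of each z_i to ℓ is at most ρ > 0, and (2) the pairwise distances between the orthogonal projections of the z_i onto ℓ are at least κ > 0, where 1/10 > κ ≥ 10ρ. Then there exists a C^{d+1} curve ω : [-1,1] → B^n passing through the points z_0, z_1, …, z_{d+1} and satisfying M_1(ω) ≤ 1 and M_k(ω) ≤ D_k · ρ/κ^k for k = 2, 3, …, d+1. -/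
open scoped RealInnerProductSpace
/-! Choose the direction `w = ±v` of `ℓ` along which the points lie beyond `z₀`, and write
`z_j = z₀ + t_j • w + e_j` with `e_j ⟂ w`, `‖e_j‖ ≤ ρ`; the `t_j` are `κ`-separated and lie in
`[1/2, 3/2]`. The curve runs along the chord `z₀ + u • w`, `u = a (s + 1) ∈ [0, max t_j]`, which
stays in the ball by convexity, and adds bumps `ψ((u - t_j) / h) • e_j` of width `h = 9κ/10`.
The bumps have disjoint supports, so at each time at most one of them is active: it makes the
curve pass through `z_j` at `u = t_j`, contributes `(a/h)^k ψ^{(k)} e_j = O(ρ / κ^k)` to the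
`k`-th derivative, and perturbs the velocity `a • w` only orthogonally and by at most `2a/3`. -/

open Real

lemma expNegInvGlue_of_pos {y : ℝ} (hy : 0 < y) : expNegInvGlue y = exp (-y⁻¹) := by
  simp [expNegInvGlue, hy.not_ge]

lemma sq_mul_exp_neg_le {s : ℝ} (hs : 0 ≤ s) : s ^ 2 * exp (-s) ≤ 4 * exp (-2) := by
  have h : s / 2 ≤ exp (s / 2 - 1) := by linarith [add_one_le_exp (s / 2 - 1)]
  calc s ^ 2 * exp (-s) = 4 * (s / 2) ^ 2 * exp (-s) := by ring
    _ ≤ 4 * exp (s / 2 - 1) ^ 2 * exp (-s) := by gcongr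
    _ = 4 * (exp (s / 2 - 1) ^ 2 * exp (-s)) := by ring
    _ = 4 * exp (-2) := by rw [← exp_nat_mul, ← exp_add]; ring_nf

lemma expNegInvGlue.hasDerivAt (y : ℝ) :
    HasDerivAt expNegInvGlue (y⁻¹ ^ 2 * expNegInvGlue y) y := by
  simpa using expNegInvGlue.hasDerivAt_polynomial_eval_inv_mul 1 y

lemma expNegInvGlue.inv_sq_mul_le (y : ℝ) : y⁻¹ ^ 2 * expNegInvGlue y ≤ 4 * exp (-2) := by
  rcases le_or_gt y 0 with hy | hy
  · rw [expNegInvGlue.zero_of_nonpos hy, mul_zero]; positivity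
  · rw [expNegInvGlue_of_pos hy]
    exact sq_mul_exp_neg_le (inv_nonneg.2 hy.le)

noncomputable def smoothBump (x : ℝ) : ℝ := expNegInvGlue (1 - 4 * x ^ 2) / expNegInvGlue 1

namespace smoothBump

lemma expNegInvGlue_one : expNegInvGlue 1 = exp (-1) := by
  rw [expNegInvGlue_of_pos one_pos, inv_one]

protected lemma contDiff {n : ℕ∞} : ContDiff ℝ n smoothBump :=
  (expNegInvGlue.contDiff.comp
    (contDiff_const.sub (contDiff_const.mul (contDiff_id.pow 2)))).div_const _

lemma nonneg (x : ℝ) : 0 ≤ smoothBump x :=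
  div_nonneg (expNegInvGlue.nonneg _) (expNegInvGlue.nonneg _)

lemma le_one (x : ℝ) : smoothBump x ≤ 1 :=
  div_le_one_of_le₀ (expNegInvGlue.monotone (by nlinarith)) (expNegInvGlue.nonneg _)

@[simp] lemma zero : smoothBump 0 = 1 := by
  simp [smoothBump, expNegInvGlue_one, (exp_pos _).ne']

lemma eq_zero_of_half_le_abs {x : ℝ} (hx : 1 / 2 ≤ |x|) : smoothBump x = 0 := by
  have : 1 - 4 * x ^ 2 ≤ 0 := by nlinarith [sq_abs x, abs_nonneg x]
  rw [smoothBump, expNegInvGlue.zero_of_nonpos this, zero_div]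

lemma hasCompactSupport : HasCompactSupport smoothBump :=
  HasCompactSupport.intro (isCompact_Icc (a := -(1 / 2)) (b := 1 / 2)) fun _ hx =>
    eq_zero_of_half_le_abs (not_le.1 (mt abs_le.1 hx)).le

lemma iteratedDeriv_eq_zero (k : ℕ) {x : ℝ} (hx : 1 / 2 < |x|) :
    iteratedDeriv k smoothBump x = 0 := by
  have hzero : smoothBump =ᶠ[nhds x] fun _ => 0 := by
    filter_upwards [(isOpen_lt continuous_const continuous_abs).mem_nhds hx] with y hy
    exact eq_zero_of_half_le_abs hy.le
  rw [(hzero.iteratedDeriv k).eq_of_nhds, iteratedDeriv_const]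
  split_ifs <;> rfl

lemma exists_abs_iteratedDeriv_le (k : ℕ) :
    ∃ C, 0 < C ∧ ∀ x, |iteratedDeriv k smoothBump x| ≤ C := by
  have hcont : Continuous (iteratedDeriv k smoothBump) :=
    smoothBump.contDiff.continuous_iteratedDeriv k (by exact_mod_cast le_top)
  have hsupp : HasCompactSupport (iteratedDeriv k smoothBump) := by
    rw [iteratedDeriv_eq_equiv_comp]
    exact (hasCompactSupport.iteratedFDeriv k).comp_left (map_zero _)
  obtain ⟨C, hC⟩ := hcont.bounded_above_of_compact_support hsupp
  exact ⟨max C 1, by positivity, fun x => (hC x).trans (le_max_left _ _)⟩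

lemma abs_deriv_le (x : ℝ) : |deriv smoothBump x| ≤ 6 := by
  set y := 1 - 4 * x ^ 2
  have hy : HasDerivAt (fun x : ℝ => 1 - 4 * x ^ 2) (-(8 * x)) x :=
    (((hasDerivAt_pow 2 x).const_mul 4).const_sub 1).congr_deriv (by ring)
  have hderiv : HasDerivAt smoothBump
      (y⁻¹ ^ 2 * expNegInvGlue y * (-(8 * x)) / expNegInvGlue 1) x :=
    ((expNegInvGlue.hasDerivAt y).comp x hy).div_const _
  rw [hderiv.deriv]
  rcases le_or_gt y 0 with hy₀ | hy₀
  · simp [expNegInvGlue.zero_of_nonpos hy₀]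
  have hx : |8 * x| ≤ 4 := by
    rw [abs_mul, abs_of_pos (by norm_num : (0 : ℝ) < 8)]
    nlinarith [sq_abs x, abs_nonneg x]
  have hpos : 0 ≤ y⁻¹ ^ 2 * expNegInvGlue y := by
    have := expNegInvGlue.nonneg y; positivity
  rw [abs_div, abs_mul, abs_neg, abs_of_nonneg hpos, expNegInvGlue_one, abs_of_pos (exp_pos _),
    div_le_iff₀ (exp_pos _)]
  have hexp : exp (-2) = exp (-1) * exp (-1) := by rw [← exp_add]; norm_num
  have he : exp (-1) * 8 ≤ 3 := by
    rw [exp_neg, inv_mul_le_iff₀ (exp_pos 1)]; linarith [exp_one_gt_d9]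
  have hglue := expNegInvGlue.inv_sq_mul_le y
  calc y⁻¹ ^ 2 * expNegInvGlue y * |8 * x| ≤ 4 * exp (-2) * 4 := by gcongr
    _ = 16 * exp (-1) * exp (-1) := by rw [hexp]; ring
    _ ≤ 6 * exp (-1) := by nlinarith [exp_pos (-1)]

end smoothBump

lemma iteratedDeriv_comp_affine {f : ℝ → ℝ} {k : ℕ} (hf : ContDiff ℝ k f) (c m x : ℝ) :
    iteratedDeriv k (fun s => f (c * s + m)) x = c ^ k * iteratedDeriv k f (c * x + m) := by
  rw [iteratedDeriv_comp_const_mul (f := fun y => f (y + m))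
    (hf.comp (contDiff_id.add contDiff_const)), iteratedDeriv_comp_add_const]

lemma iteratedDeriv_line_add_sum_comp_affine_smul {E : Type*} [NormedAddCommGroup E]
    [NormedSpace ℝ E] {ι : Type*} [Fintype ι] {f : ℝ → ℝ} {k : ℕ} (hf : ContDiff ℝ k f)
    (hk : k ≠ 0) (p v : E) (c : ℝ) (m : ι → ℝ) (e : ι → E) (x : ℝ) :
    iteratedDeriv k (fun s => p + s • v + ∑ j, f (c * s + m j) • e j) x =
      (if k = 1 then v else 0) + ∑ j, (c ^ k * iteratedDeriv k f (c * x + m j)) • e j := by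
  have hterm : ∀ j, ContDiff ℝ k fun s => f (c * s + m j) :=
    fun j => hf.comp ((contDiff_const.mul contDiff_id).add contDiff_const)
  simp_rw [add_assoc]
  rw [iteratedDeriv_const_add (Nat.pos_of_ne_zero hk),
    iteratedDeriv_fun_add (f := fun s => s • v) (g := fun s => ∑ j, f (c * s + m j) • e j)
      (contDiff_id.smul contDiff_const).contDiffAt
      (ContDiff.sum fun j _ => (hterm j).smul contDiff_const).contDiffAt,
    iteratedDeriv_smul_const (f := fun s => s) contDiff_id.contDiffAt,
    iteratedDeriv_fun_sum (f := fun j s => f (c * s + m j) • e j)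
      fun j _ => ((hterm j).smul contDiff_const).contDiffAt]
  congr 1
  · split_ifs <;> simp_all [iteratedDeriv_fun_id]
  · refine Finset.sum_congr rfl fun j _ => ?_
    rw [iteratedDeriv_smul_const (hterm j).contDiffAt, iteratedDeriv_comp_affine hf]

lemma pairwise_one_lt_abs_sub_div {ι : Type*} {t : ι → ℝ} {h : ℝ} (hh : 0 < h)
    (hsep : Pairwise fun i j => h < |t i - t j|) (u : ℝ) :
    Pairwise fun i j => 1 < |(u - t i) / h - (u - t j) / h| := by
  intro i j hij
  rw [← sub_div, abs_div, abs_of_pos hh, one_lt_div hh, sub_sub_sub_cancel_left, abs_sub_comm]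
  exact hsep hij

lemma exists_sum_smul_eq_smul {M : Type*} [AddCommMonoid M] [Module ℝ M] {ι : Type*}
    [Fintype ι] [Nonempty ι] {x : ι → ℝ} (hx : Pairwise fun i j => 1 < |x i - x j|)
    {g : ℝ → ℝ} (hg : ∀ y, 1 / 2 < |y| → g y = 0) (e : ι → M) :
    ∃ j, ∑ i, g (x i) • e i = g (x j) • e j := by
  by_cases h : ∃ j, |x j| ≤ 1 / 2
  · obtain ⟨j, hj⟩ := h
    refine ⟨j, Finset.sum_eq_single j (fun i _ hij => ?_) (by simp)⟩
    have := (hx hij).trans_le (abs_sub _ _)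
    rw [hg _ (by linarith), zero_smul]
  · push Not at h
    obtain ⟨j⟩ := ‹Nonempty ι›
    refine ⟨j, ?_⟩
    rw [hg _ (h j), zero_smul]
    exact Finset.sum_eq_zero fun i _ => by rw [hg _ (h i), zero_smul]

section LineBumpCurve

variable {E : Type*} [NormedAddCommGroup E] [InnerProductSpace ℝ E] {ι : Type*} [Fintype ι]
  {z₀ w : E} {a h ρ : ℝ} {t : ι → ℝ} {e : ι → E}

lemma mem_Icc_of_norm_add_smul_le (hz₀ : ‖z₀‖ = 1) (hw : ‖w‖ = 1) (hz₀w : ⟪z₀, w⟫ ≤ 0) {u : ℝ}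
    (hu : ‖z₀ + u • w‖ ≤ 1 / 2) : u ∈ Set.Icc (1 / 2 : ℝ) (3 / 2) := by
  have hsmul : ‖u • w‖ = |u| := by rw [norm_smul, hw, mul_one, Real.norm_eq_abs]
  have hpos : 0 < u := by
    by_contra! hu₀
    have hsq : ‖z₀ + u • w‖ ^ 2 = 1 + 2 * (u * ⟪z₀, w⟫) + ‖u • w‖ ^ 2 := by
      rw [norm_add_sq_real, real_inner_smul_right, hz₀, one_pow]
    nlinarith [mul_nonneg_of_nonpos_of_nonpos hu₀ hz₀w, norm_nonneg (z₀ + u • w),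
      sq_nonneg ‖u • w‖]
  have h₁ := norm_sub_le (z₀ + u • w) (u • w)
  have h₂ := norm_sub_le (z₀ + u • w) z₀
  rw [add_sub_cancel_right, hz₀] at h₁
  rw [add_sub_cancel_left, hz₀] at h₂
  rw [hsmul, abs_of_pos hpos] at h₁ h₂
  constructor <;> linarith

noncomputable def lineBumpCurve (z₀ w : E) (a h : ℝ) (t : ι → ℝ) (e : ι → E) (s : ℝ) : E :=
  z₀ + (a * (s + 1)) • w + ∑ j, smoothBump ((a * (s + 1) - t j) / h) • e j

lemma lineBumpCurve_eq_affine (z₀ w : E) (a h : ℝ) (t : ι → ℝ) (e : ι → E) :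
    lineBumpCurve z₀ w a h t e = fun s =>
      (z₀ + a • w) + s • (a • w) + ∑ j, smoothBump (a / h * s + (a - t j) / h) • e j := by
  funext s
  simp only [lineBumpCurve, smul_smul]
  congr 1
  · rw [add_assoc, ← add_smul]; ring_nf
  · refine Finset.sum_congr rfl fun j _ => ?_
    ring_nf

lemma contDiff_lineBumpCurve {n : ℕ∞} : ContDiff ℝ n (lineBumpCurve z₀ w a h t e) := by
  rw [lineBumpCurve_eq_affine]
  exact (contDiff_const.add (contDiff_id.smul contDiff_const)).add <| ContDiff.sum fun j _ =>
    (smoothBump.contDiff.comp ((contDiff_const.mul contDiff_id).add contDiff_const)).smul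
      contDiff_const

lemma iteratedDeriv_lineBumpCurve {k : ℕ} (hk : k ≠ 0) (s : ℝ) :
    iteratedDeriv k (lineBumpCurve z₀ w a h t e) s = (if k = 1 then a • w else 0) +
      ∑ j, ((a / h) ^ k * iteratedDeriv k smoothBump ((a * (s + 1) - t j) / h)) • e j := by
  rw [lineBumpCurve_eq_affine,
    iteratedDeriv_line_add_sum_comp_affine_smul smoothBump.contDiff hk]
  congr 3 with j
  ring_nf

lemma lineBumpCurve_neg_one (hh : 0 < h) (ht : ∀ j, h / 2 ≤ t j) :
    lineBumpCurve z₀ w a h t e (-1) = z₀ := by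
  have hzero : ∀ j, smoothBump (-t j / h) = 0 := fun j => by
    refine smoothBump.eq_zero_of_half_le_abs ?_
    rw [abs_div, abs_of_pos hh, le_div_iff₀ hh, abs_neg]
    linarith [ht j, le_abs_self (t j)]
  simp [lineBumpCurve, hzero]

lemma lineBumpCurve_apply (ha : a ≠ 0) (hh : 0 < h) (hsep : Pairwise fun i j => h < |t i - t j|)
    (i : ι) : lineBumpCurve z₀ w a h t e (t i / a - 1) = z₀ + t i • w + e i := by
  have hu : a * (t i / a - 1 + 1) = t i := by field_simp; ring
  simp only [lineBumpCurve, hu]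
  rw [Finset.sum_eq_single i, sub_self, zero_div, smoothBump.zero, one_smul]
  · intro j _ hji
    rw [smoothBump.eq_zero_of_half_le_abs, zero_smul]
    have := pairwise_one_lt_abs_sub_div hh hsep (t i) hji
    simp only [sub_self, zero_div, sub_zero] at this
    linarith
  · simp

lemma norm_lineBumpCurve_le_one [Nonempty ι] (hz₀ : ‖z₀‖ ≤ 1) (hw : ‖w‖ = 1)
    (hend : ‖z₀ + (2 * a) • w‖ ≤ 1) (hh : 0 < h) (hh' : h ≤ 1 / 10) (hρ : ρ ≤ 1 / 100)
    (ht : ∀ j, ‖z₀ + t j • w‖ ≤ 1 / 2) (he : ∀ j, ‖e j‖ ≤ ρ)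
    (hsep : Pairwise fun i j => h < |t i - t j|) {s : ℝ} (hs : s ∈ Set.Icc (-1 : ℝ) 1) :
    ‖lineBumpCurve z₀ w a h t e s‖ ≤ 1 := by
  set u := a * (s + 1)
  obtain ⟨j, hj⟩ := exists_sum_smul_eq_smul (pairwise_one_lt_abs_sub_div hh hsep u)
    (fun y hy => smoothBump.eq_zero_of_half_le_abs hy.le) e
  rw [lineBumpCurve, hj]
  by_cases hnear : |(u - t j) / h| ≤ 1 / 2
  · have hu : |u - t j| ≤ 1 / 20 := by
      rw [abs_div, abs_of_pos hh, div_le_iff₀ hh] at hnear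
      linarith
    have hbump : ‖smoothBump ((u - t j) / h) • e j‖ ≤ ρ := by
      rw [norm_smul, Real.norm_of_nonneg (smoothBump.nonneg _)]
      exact (mul_le_of_le_one_left (norm_nonneg _) (smoothBump.le_one _)).trans (he j)
    calc ‖z₀ + u • w + smoothBump ((u - t j) / h) • e j‖
        ≤ ‖z₀ + t j • w‖ + ‖(u - t j) • w‖ + ‖smoothBump ((u - t j) / h) • e j‖ := by
          rw [show z₀ + u • w = (z₀ + t j • w) + (u - t j) • w by module]
          exact norm_add₃_le
      _ ≤ 1 / 2 + 1 / 20 + 1 / 100 := by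
          rw [norm_smul, hw, mul_one, Real.norm_eq_abs]
          gcongr
          exacts [ht j, hbump.trans hρ]
      _ ≤ 1 := by norm_num
  · rw [smoothBump.eq_zero_of_half_le_abs (by linarith), zero_smul, add_zero,
      ← mem_closedBall_zero_iff]
    have hu : z₀ + u • w = z₀ + ((s + 1) / 2) • ((2 * a) • w) := by
      rw [smul_smul]; congr 2; ring
    rw [hu]
    refine (convex_closedBall _ _).add_smul_mem (mem_closedBall_zero_iff.2 hz₀)
      (mem_closedBall_zero_iff.2 hend) ⟨?_, ?_⟩ <;> linarith [hs.1, hs.2]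

lemma norm_deriv_lineBumpCurve_le_one [Nonempty ι] (hw : ‖w‖ = 1) (ha : 0 ≤ a)
    (ha' : a ≤ 3 / 4) (hh : 0 < h) (hρh : 9 * ρ ≤ h) (he : ∀ j, ‖e j‖ ≤ ρ)
    (horth : ∀ j, ⟪w, e j⟫ = 0) (hsep : Pairwise fun i j => h < |t i - t j|) (s : ℝ) :
    ‖iteratedDeriv 1 (lineBumpCurve z₀ w a h t e) s‖ ≤ 1 := by
  obtain ⟨j, hj⟩ := exists_sum_smul_eq_smul (pairwise_one_lt_abs_sub_div hh hsep (a * (s + 1)))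
    (g := fun y => a / h * iteratedDeriv 1 smoothBump y)
    (fun y hy => by rw [smoothBump.iteratedDeriv_eq_zero 1 hy, mul_zero]) e
  simp only [iteratedDeriv_lineBumpCurve one_ne_zero, if_true, pow_one] at hj ⊢
  rw [hj]
  set r := a / h * iteratedDeriv 1 smoothBump ((a * (s + 1) - t j) / h)
  have hr : ‖r • e j‖ ≤ 2 / 3 * a := by
    have hρ : 0 ≤ ρ := (norm_nonneg _).trans (he j)
    rw [norm_smul, Real.norm_eq_abs, abs_mul, abs_of_nonneg (div_nonneg ha hh.le),
      iteratedDeriv_one]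
    calc a / h * |deriv smoothBump ((a * (s + 1) - t j) / h)| * ‖e j‖ ≤ a / h * 6 * ρ := by
          gcongr
          exacts [smoothBump.abs_deriv_le _, he j]
      _ = 6 * a * (ρ / h) := by ring
      _ ≤ 6 * a * (1 / 9) :=
          mul_le_mul_of_nonneg_left (by rw [div_le_iff₀ hh]; linarith) (by positivity)
      _ = 2 / 3 * a := by ring
  have hpyth := norm_add_sq_eq_norm_sq_add_norm_sq_real (x := a • w) (y := r • e j)
    (by rw [real_inner_smul_left, real_inner_smul_right, horth, mul_zero, mul_zero])
  rw [norm_smul, hw, mul_one, Real.norm_of_nonneg ha] at hpyth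
  nlinarith [norm_nonneg (a • w + r • e j), norm_nonneg (r • e j)]

lemma norm_iteratedDeriv_lineBumpCurve_le [Nonempty ι] {k : ℕ} (hk : 2 ≤ k) {C : ℝ}
    (hC : ∀ x, |iteratedDeriv k smoothBump x| ≤ C) (ha : 0 ≤ a) (hh : 0 < h)
    (he : ∀ j, ‖e j‖ ≤ ρ) (hsep : Pairwise fun i j => h < |t i - t j|) (s : ℝ) :
    ‖iteratedDeriv k (lineBumpCurve z₀ w a h t e) s‖ ≤ (a / h) ^ k * C * ρ := by
  obtain ⟨j, hj⟩ := exists_sum_smul_eq_smul (pairwise_one_lt_abs_sub_div hh hsep (a * (s + 1)))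
    (g := fun y => (a / h) ^ k * iteratedDeriv k smoothBump y)
    (fun y hy => by rw [smoothBump.iteratedDeriv_eq_zero k hy, mul_zero]) e
  rw [iteratedDeriv_lineBumpCurve (by omega), if_neg (by omega), zero_add, hj, norm_smul,
    Real.norm_eq_abs, abs_mul, abs_of_nonneg (by positivity)]
  have hC₀ : 0 ≤ C := (abs_nonneg _).trans (hC 0)
  exact mul_le_mul (mul_le_mul_of_nonneg_left (hC _) (by positivity)) (he j) (norm_nonneg _)
    (by positivity)

theorem exists_curve_near_line [Nonempty ι] (D : ℕ → ℝ)
    (hD : ∀ k x, |iteratedDeriv k smoothBump x| ≤ D k) {z : ι → E} {κ : ℝ}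
    (hz₀ : ‖z₀‖ = 1) (hw : ‖w‖ = 1) (hz₀w : ⟪z₀, w⟫ ≤ 0) (hz : ∀ j, ‖z j‖ ≤ 1 / 3)
    (hκ : κ < 1 / 10) (hρκ : 10 * ρ ≤ κ) (hκ₀ : 0 < κ)
    (hdist : ∀ j, ‖z j - (z₀ + t j • w)‖ ≤ ρ) (horth : ∀ j, ⟪w, z j - (z₀ + t j • w)⟫ = 0)
    (hsep : Pairwise fun i j => κ ≤ |t i - t j|) :
    ∃ ω : ℝ → E, (∀ n : ℕ, ContDiff ℝ n ω) ∧ (∀ s ∈ Set.Icc (-1 : ℝ) 1, ‖ω s‖ ≤ 1) ∧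
      ω (-1) = z₀ ∧ (∀ j, ∃ s ∈ Set.Icc (-1 : ℝ) 1, ω s = z j) ∧
      (∀ s, ‖iteratedDeriv 1 ω s‖ ≤ 1) ∧
      ∀ k, 2 ≤ k → ∀ s, ‖iteratedDeriv k ω s‖ ≤ D k * ρ / κ ^ k := by
  set e := fun j => z j - (z₀ + t j • w)
  have hnear : ∀ j, ‖z₀ + t j • w‖ ≤ 1 / 2 := fun j => by
    have := norm_sub_le (z j) (e j)
    rw [sub_sub_cancel] at this
    linarith [hz j, hdist j]
  have ht := fun j => mem_Icc_of_norm_add_smul_le hz₀ hw hz₀w (hnear j)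
  obtain ⟨jmax, hjmax⟩ := Finite.exists_max t
  set a := t jmax / 2 with ha_def
  -- strictly below `κ`, so that neighbouring bumps do not even touch
  set h := 9 / 10 * κ with hh_def
  have ha : 0 < a := by linarith [(ht jmax).1]
  have ha' : a ≤ 3 / 4 := by linarith [(ht jmax).2]
  have hh : 0 < h := by positivity
  have hρ : 0 ≤ ρ := (norm_nonneg _).trans (hdist jmax)
  have hsep' : Pairwise fun i j => h < |t i - t j| := fun i j hij => by linarith [hsep hij]
  refine ⟨lineBumpCurve z₀ w a h t e, fun _ => contDiff_lineBumpCurve, fun s hs => ?_,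
    lineBumpCurve_neg_one hh fun j => by linarith [(ht j).1], fun j => ?_,
    norm_deriv_lineBumpCurve_le_one hw ha.le ha' hh (by linarith) hdist horth hsep',
    fun k hk s => (norm_iteratedDeriv_lineBumpCurve_le hk (hD k) ha.le hh hdist hsep' s).trans ?_⟩
  · refine norm_lineBumpCurve_le_one hz₀.le hw ?_ hh (by linarith) (by linarith) hnear hdist
      hsep' hs
    rw [show 2 * a = t jmax by ring]
    linarith [hnear jmax]
  · refine ⟨t j / a - 1, ⟨?_, ?_⟩, ?_⟩
    · linarith [div_nonneg (by linarith [(ht j).1] : 0 ≤ t j) ha.le]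
    · linarith [(div_le_iff₀ ha).2 (by linarith [hjmax j] : t j ≤ 2 * a)]
    · rw [lineBumpCurve_apply ha.ne' hh hsep', add_sub_cancel]
  · have hah : a / h ≤ 1 / κ := by
      rw [div_le_div_iff₀ hh hκ₀]; nlinarith
    have hD₀ : 0 ≤ D k := (abs_nonneg _).trans (hD k 0)
    calc (a / h) ^ k * D k * ρ ≤ (1 / κ) ^ k * D k * ρ := by gcongr
      _ = D k * ρ / κ ^ k := by rw [one_div_pow]; ring

end LineBumpCurve

lemma projLine_neg {n : ℕ} (z₀ v p : En n) : projLine n z₀ (-v) p = projLine n z₀ v p := by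
  simp [projLine, inner_neg_right]

lemma inner_sub_projLine {n : ℕ} {v : En n} (hv : ‖v‖ = 1) (z₀ p : En n) :
    ⟪v, p - projLine n z₀ v p⟫ = 0 := by
  rw [projLine, inner_sub_right, inner_add_right, real_inner_smul_right,
    real_inner_self_eq_norm_sq, hv, inner_sub_left, real_inner_comm v p, real_inner_comm v z₀]
  ring

lemma dist_projLine {n : ℕ} {v : En n} (hv : ‖v‖ = 1) (z₀ p q : En n) :
    dist (projLine n z₀ v p) (projLine n z₀ v q) = |⟪p - z₀, v⟫ - ⟪q - z₀, v⟫| := by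
  rw [projLine, projLine, dist_add_left, dist_eq_norm, ← sub_smul, norm_smul, hv, mul_one,
    Real.norm_eq_abs]

lemma Mkc_le_of_norm_iteratedDeriv_le {n k : ℕ} {ω : ℝ → En n} {B : ℝ} (hB : 0 ≤ B)
    (h : ∀ s ∈ Set.Icc (-1 : ℝ) 1, ‖iteratedDeriv k ω s‖ ≤ B) : Mkc n k ω ≤ B :=
  Real.iSup_le (fun s => Real.iSup_le (fun i =>
    ((Real.norm_eq_abs _).symm.trans_le (PiLp.norm_apply_le _ i)).trans (h s s.2)) hB) hB

/-- there are constants `D_k > 0`, each depending only on `k`, such that if a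
line `ℓ` through `z₀ ∈ S^{n-1}` passes within `ρ` of `d+1` distinct points of `B̂^n` whose
projections to `ℓ` are `κ`-separated (`1/10 > κ ≥ 10ρ`), then there is a `C^{d+1}` curve
`ω : [-1,1] → B^n` through `z₀, z_1, …, z_{d+1}` with `M_1(ω) ≤ 1` and
`M_k(ω) ≤ D_k·ρ/κ^k` for `2 ≤ k ≤ d+1`. -/
theorem stmt15 :
    ∃ D : ℕ → ℝ, (∀ k, 2 ≤ k → 0 < D k) ∧
      ∀ n d : ℕ, 1 ≤ n → 1 ≤ d →
        ∀ z : Fin (d + 1) → En n, Function.Injective z →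
          (∀ i, z i ∈ Metric.closedBall (0 : En n) (1 / 3)) →
          ∀ z₀ ∈ Metric.sphere (0 : En n) 1,
            ∀ v : En n, ‖v‖ = 1 →
              ∀ ρ κ : ℝ, 0 < ρ → κ < 1 / 10 → 10 * ρ ≤ κ →
                (∀ i, distLine n z₀ v (z i) ≤ ρ) →
                (∀ i j, i ≠ j →
                  κ ≤ dist (projLine n z₀ v (z i)) (projLine n z₀ v (z j))) →
                ∃ ω : ℝ → En n, ContDiff ℝ (d + 1 : ℕ) ω ∧
                  (∀ t ∈ Set.Icc (-1 : ℝ) 1, ω t ∈ Metric.closedBall (0 : En n) 1) ∧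
                  (∃ t ∈ Set.Icc (-1 : ℝ) 1, ω t = z₀) ∧
                  (∀ i, ∃ t ∈ Set.Icc (-1 : ℝ) 1, ω t = z i) ∧
                  Mkc n 1 ω ≤ 1 ∧
                  ∀ k : ℕ, 2 ≤ k → k ≤ d + 1 → Mkc n k ω ≤ D k * ρ / κ ^ k := by
  choose D hD_pos hD using smoothBump.exists_abs_iteratedDeriv_le
  refine ⟨D, fun k _ => hD_pos k, ?_⟩
  intro n d _ _ z _ hz z₀ hz₀ v hv ρ κ hρ hκ hρκ hdist hproj
  wlog hv₀ : ⟪z₀, v⟫ ≤ 0 generalizing v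
  · refine this (-v) (by rwa [norm_neg]) (fun i => ?_) (fun i j hij => ?_)
      (by rw [inner_neg_right]; linarith)
    · rw [distLine, projLine_neg]; exact hdist i
    · rw [projLine_neg, projLine_neg]; exact hproj i j hij
  have hκ₀ : 0 < κ := by linarith
  obtain ⟨ω, hω, hball, hω₀, hpts, hω₁, hωk⟩ := exists_curve_near_line D hD
    (t := fun i => ⟪z i - z₀, v⟫) (mem_sphere_zero_iff_norm.1 hz₀) hv hv₀
    (fun i => mem_closedBall_zero_iff.1 (hz i)) hκ hρκ hκ₀
    (fun i => (dist_eq_norm _ _).symm.trans_le (hdist i))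
    (fun i => inner_sub_projLine hv z₀ (z i))
    (fun i j hij => (hproj i j hij).trans_eq (dist_projLine hv z₀ (z i) (z j)))
  refine ⟨ω, hω (d + 1), fun s hs => mem_closedBall_zero_iff.2 (hball s hs),
    ⟨-1, by norm_num, hω₀⟩, hpts,
    Mkc_le_of_norm_iteratedDeriv_le zero_le_one fun s _ => hω₁ s,
    fun k hk _ => Mkc_le_of_norm_iteratedDeriv_le ?_ fun s _ => hωk k hk s⟩
  have := hD_pos k
  positivity
end

section
/- Let n ≥ 2. There exists a constant θ_n > 0, depending only on n, with the following property: let 0 < ε ≤ 1/(10√n), let z_0 ∈ S^{n-1}, and let N be a natural number. Then for every collection U of q grid ε-cubes contained in B̂^n with q ≥ θ_n · N · (1/ε)^{n-1}, there exists a straight line ℓ in ℝ^n passing through z_0 which intersects at least N of the ε-cubes in U. -/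
/-!
The central projection from `z₀` onto the hyperplane `z₀ᗮ` maps the ball of radius `1/3` into
the ball of radius `3` of this `(n-1)`-dimensional space, and two points whose projections are
close lie close to a common line through `z₀`. Cutting that ball into `O((n/ε)^(n-1))` cells of
side `≈ ε/n`, the pigeonhole principle gives a cell containing the projections of the centres of
`N` cubes of `U`; the line through `z₀` and a point of that cell passes within `ε/2` of each of
these centres, hence meets their cubes.
-/

open scoped RealInnerProductSpace
open scoped RealInnerProductSpace
open Module

section CentralProjection

variable {E : Type*} [NormedAddCommGroup E] [InnerProductSpace ℝ E] {z₀ q : E}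

/-- For a unit vector `z₀`, the point where the line through `z₀` and `q` meets `z₀ᗮ`. -/
noncomputable def centralProj (z₀ q : E) : E := z₀ + (1 - ⟪q, z₀⟫)⁻¹ • (q - z₀)

lemma one_sub_inner_mem_Icc (hz : ‖z₀‖ = 1) (hq : ‖q‖ ≤ 1 / 3) :
    1 - ⟪q, z₀⟫ ∈ Set.Icc (2 / 3 : ℝ) (4 / 3) := by
  have h := abs_real_inner_le_norm q z₀
  rw [hz, mul_one] at h
  constructor <;> linarith [(abs_le.mp (h.trans hq)).1, (abs_le.mp (h.trans hq)).2]

lemma real_inner_lt_one (hz : ‖z₀‖ = 1) (hq : ‖q‖ < 1) : ⟪q, z₀⟫ < 1 :=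
  (real_inner_le_norm q z₀).trans_lt (by rwa [hz, mul_one])

lemma centralProj_mem_orthogonal (hz : ‖z₀‖ = 1) (hq : ⟪q, z₀⟫ ≠ 1) :
    centralProj z₀ q ∈ (ℝ ∙ z₀)ᗮ := by
  have hs : 1 - ⟪q, z₀⟫ ≠ 0 := sub_ne_zero.mpr (Ne.symm hq)
  have hzz : ⟪z₀, z₀⟫ = 1 := by rw [real_inner_self_eq_norm_sq, hz, one_pow]
  rw [Submodule.mem_orthogonal_singleton_iff_inner_left, centralProj, inner_add_left,
    real_inner_smul_left, inner_sub_left, hzz]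
  field_simp
  ring

lemma add_smul_centralProj_sub (hq : ⟪q, z₀⟫ ≠ 1) :
    z₀ + (1 - ⟪q, z₀⟫) • (centralProj z₀ q - z₀) = q := by
  rw [centralProj, add_sub_cancel_left, smul_smul, mul_inv_cancel₀ (sub_ne_zero.mpr hq.symm),
    one_smul, add_sub_cancel]

lemma norm_centralProj_le (hz : ‖z₀‖ = 1) (hq : ‖q‖ ≤ 1 / 3) : ‖centralProj z₀ q‖ ≤ 3 := by
  obtain ⟨hs₁, -⟩ := one_sub_inner_mem_Icc hz hq
  have hqz : ‖q - z₀‖ ≤ 4 / 3 := (norm_sub_le q z₀).trans (by linarith)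
  calc ‖centralProj z₀ q‖ ≤ ‖z₀‖ + (1 - ⟪q, z₀⟫)⁻¹ * ‖q - z₀‖ := by
        rw [centralProj]
        refine (norm_add_le _ _).trans_eq ?_
        rw [norm_smul, Real.norm_of_nonneg (by positivity)]
    _ ≤ 1 + (3 / 2) * (4 / 3) := by
        rw [hz]
        gcongr
        rw [inv_le_comm₀ (by linarith) (by norm_num)]
        linarith
    _ = 3 := by norm_num

/-- The line through `z₀` and `y` passes within `4/3 * ‖y - centralProj z₀ q‖` of `q`. -/
lemma norm_sub_le_of_centralProj (hz : ‖z₀‖ = 1) (hq : ‖q‖ ≤ 1 / 3) (y : E) :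
    ‖z₀ + (1 - ⟪q, z₀⟫) • (y - z₀) - q‖ ≤ 4 / 3 * ‖y - centralProj z₀ q‖ := by
  obtain ⟨hs₁, hs₂⟩ := one_sub_inner_mem_Icc hz hq
  have hs : 1 - ⟪q, z₀⟫ ≠ 0 := by linarith
  have key : z₀ + (1 - ⟪q, z₀⟫) • (y - z₀) - q = (1 - ⟪q, z₀⟫) • (y - centralProj z₀ q) := by
    simp only [centralProj, smul_sub, smul_add, smul_smul, mul_inv_cancel₀ hs, one_smul]
    abel
  rw [key, norm_smul, Real.norm_of_nonneg (by linarith)]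
  gcongr

end CentralProjection

section Cells

variable {E ι : Type*} [NormedAddCommGroup E] [InnerProductSpace ℝ E] [Fintype ι]

noncomputable def cellIndex (b : ι → E) (δ : ℝ) (x : E) : ι → ℤ := fun i => ⌊⟪b i, x⟫ / δ⌋

lemma cellIndex_mem_piFinset [DecidableEq ι] {b : ι → E} (hb : ∀ i, ‖b i‖ ≤ 1) {δ R : ℝ}
    (hδ : 0 < δ) {x : E} (hx : ‖x‖ ≤ R) :
    cellIndex b δ x ∈ Fintype.piFinset fun _ => Finset.Icc (-⌈R / δ⌉₊ : ℤ) ⌈R / δ⌉₊ := by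
  rw [Fintype.mem_piFinset]
  intro i
  have hbx : |⟪b i, x⟫| ≤ R :=
    calc |⟪b i, x⟫| ≤ ‖b i‖ * ‖x‖ := abs_real_inner_le_norm _ _
      _ ≤ 1 * R := by gcongr; exact hb i
      _ = R := one_mul R
  have hceil := Nat.le_ceil (R / δ)
  have hdiv := div_le_div_of_nonneg_right (abs_le.mp hbx).2 hδ.le
  have hdiv' := div_le_div_of_nonneg_right (abs_le.mp hbx).1 hδ.le
  rw [neg_div] at hdiv'
  rw [Finset.mem_Icc, cellIndex, Int.le_floor, Int.floor_le_iff]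
  push_cast
  constructor <;> linarith

lemma norm_sq_le_card_mul_of_abs_inner_le {K : Submodule ℝ E} (b : OrthonormalBasis ι ℝ K)
    {x : E} (hx : x ∈ K) {δ : ℝ} (h : ∀ i, |⟪(b i : E), x⟫| ≤ δ) :
    ‖x‖ ^ 2 ≤ Fintype.card ι * δ ^ 2 := by
  have hsum := b.sum_sq_inner_right ⟨x, hx⟩
  simp only [Submodule.coe_inner, Submodule.coe_norm] at hsum
  calc ‖x‖ ^ 2 = ∑ i, ⟪(b i : E), x⟫ ^ 2 := hsum.symm
    _ ≤ ∑ _i : ι, δ ^ 2 :=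
        Finset.sum_le_sum fun i _ => sq_le_sq' (abs_le.mp (h i)).1 (abs_le.mp (h i)).2
    _ = Fintype.card ι * δ ^ 2 := by simp

lemma norm_sub_sq_le_of_cellIndex_eq {K : Submodule ℝ E} (b : OrthonormalBasis ι ℝ K)
    {δ : ℝ} (hδ : 0 < δ) {x y : E} (hx : x ∈ K) (hy : y ∈ K)
    (h : cellIndex (fun i => (b i : E)) δ x = cellIndex (fun i => (b i : E)) δ y) :
    ‖x - y‖ ^ 2 ≤ Fintype.card ι * δ ^ 2 := by
  refine norm_sq_le_card_mul_of_abs_inner_le b (K.sub_mem hx hy) fun i => ?_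
  have := Int.abs_sub_lt_one_of_floor_eq_floor (congrFun h i)
  rw [← sub_div, abs_div, abs_of_pos hδ, div_lt_one hδ, ← inner_sub_right] at this
  exact this.le

end Cells

section Pigeonhole

variable {E ι : Type*} [NormedAddCommGroup E] [InnerProductSpace ℝ E] [FiniteDimensional ℝ E]

/-- Pigeonhole over the cubes of side `δ` in orthonormal coordinates of `K`. -/
lemma exists_le_card_filter_norm_sub_sq_le {K : Submodule ℝ E} {Y : ι → E} {U : Finset ι}
    {R δ : ℝ} {N : ℕ} (hδ : 0 < δ) (hYK : ∀ a ∈ U, Y a ∈ K) (hYR : ∀ a ∈ U, ‖Y a‖ ≤ R)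
    (hU : (2 * ⌈R / δ⌉₊ + 1) ^ finrank ℝ K * N ≤ U.card) :
    ∃ y ∈ K, N ≤ (U.filter fun a => ‖y - Y a‖ ^ 2 ≤ finrank ℝ K * δ ^ 2).card := by
  classical
  let b := stdOrthonormalBasis ℝ K
  let T : Finset (Fin (finrank ℝ K) → ℤ) :=
    Fintype.piFinset fun _ => Finset.Icc (-⌈R / δ⌉₊ : ℤ) ⌈R / δ⌉₊
  have hT : T.card = (2 * ⌈R / δ⌉₊ + 1) ^ finrank ℝ K := by
    simp only [T, Fintype.card_piFinset, Int.card_Icc, Finset.prod_const, Finset.card_univ,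
      Fintype.card_fin]
    congr 1
    omega
  have hb : ∀ i, ‖(b i : E)‖ ≤ 1 := fun i => (b.orthonormal.1 i).le
  obtain ⟨t, -, ht⟩ := Finset.exists_le_card_fiber_of_mul_le_card_of_maps_to
    (f := fun a => cellIndex (fun i => (b i : E)) δ (Y a))
    (fun a ha => cellIndex_mem_piFinset hb hδ (hYR a ha)) ⟨0, by simp⟩ (hT ▸ hU)
  rcases Finset.eq_empty_or_nonempty
    (U.filter fun a => cellIndex (fun i => (b i : E)) δ (Y a) = t) with hempty | ⟨a₀, ha₀⟩
  · rw [hempty, Finset.card_empty, Nat.le_zero] at ht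
    exact ⟨0, K.zero_mem, ht ▸ Nat.zero_le _⟩
  obtain ⟨ha₀U, ha₀t⟩ := Finset.mem_filter.mp ha₀
  refine ⟨Y a₀, hYK a₀ ha₀U, ht.trans (Finset.card_le_card fun a ha => ?_)⟩
  obtain ⟨haU, hat⟩ := Finset.mem_filter.mp ha
  refine Finset.mem_filter.mpr ⟨haU, ?_⟩
  simpa using norm_sub_sq_le_of_cellIndex_eq b hδ (hYK a₀ ha₀U) (hYK a haU) (ha₀t.trans hat.symm)

end Pigeonhole

section Grid

variable {n : ℕ}

noncomputable def gridCenter (ε : ℝ) (α : Fin n → ℤ) : En n :=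
  WithLp.toLp 2 fun i => ((α i : ℝ) + 1 / 2) * ε

lemma mem_gridCube_of_norm_sub_gridCenter_le {ε : ℝ} {α : Fin n → ℤ} {p : En n}
    (hp : ‖p - gridCenter ε α‖ ≤ ε / 2) : p ∈ gridCube n ε α := by
  intro i
  have h := (PiLp.norm_apply_le (p - gridCenter ε α) i).trans hp
  rw [Real.norm_eq_abs, PiLp.sub_apply, abs_le] at h
  simp only [gridCenter] at h
  constructor <;> linarith [h.1, h.2]

lemma gridCenter_mem_gridCube {ε : ℝ} (hε : 0 ≤ ε) (α : Fin n → ℤ) :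
    gridCenter ε α ∈ gridCube n ε α :=
  mem_gridCube_of_norm_sub_gridCenter_le (by rw [sub_self, norm_zero]; positivity)

lemma lineThrough_smul {z₀ v : En n} {c : ℝ} (hc : c ≠ 0) :
    lineThrough n z₀ (c • v) = lineThrough n z₀ v := by
  ext x
  constructor
  · rintro ⟨t, rfl⟩
    exact ⟨t * c, by rw [smul_smul]⟩
  · rintro ⟨t, rfl⟩
    exact ⟨t / c, by rw [smul_smul, div_mul_cancel₀ _ hc]⟩

lemma pos_of_norm_eq_one {z : En n} (hz : ‖z‖ = 1) : 0 < n :=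
  Nat.pos_of_ne_zero (by rintro rfl; simp [Subsingleton.elim z 0] at hz)

lemma gridCube_inter_lineThrough_nonempty {ε : ℝ} (hε : 0 ≤ ε) {z₀ y : En n} (hz : ‖z₀‖ = 1)
    {α : Fin n → ℤ} (hα : gridCube n ε α ⊆ Metric.closedBall 0 (1 / 3))
    (hy : ‖y - centralProj z₀ (gridCenter ε α)‖ ≤ 3 * ε / 8) :
    (gridCube n ε α ∩ lineThrough n z₀ (y - z₀)).Nonempty := by
  have hq : ‖gridCenter ε α‖ ≤ 1 / 3 :=
    mem_closedBall_zero_iff.mp (hα (gridCenter_mem_gridCube hε α))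
  refine ⟨z₀ + (1 - ⟪gridCenter ε α, z₀⟫) • (y - z₀),
    mem_gridCube_of_norm_sub_gridCenter_le ?_, _, rfl⟩
  linarith [norm_sub_le_of_centralProj hz hq y]

lemma exists_norm_eq_one_forall_gridCube_inter_lineThrough_nonempty {ε : ℝ} (hε : 0 ≤ ε)
    {z₀ y : En n} (hz : ‖z₀‖ = 1) (hy : y ∈ (ℝ ∙ z₀)ᗮ) {S : Set (Fin n → ℤ)}
    (hS : ∀ α ∈ S, gridCube n ε α ⊆ Metric.closedBall 0 (1 / 3) ∧
      ‖y - centralProj z₀ (gridCenter ε α)‖ ≤ 3 * ε / 8) :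
    ∃ v : En n, ‖v‖ = 1 ∧ ∀ α ∈ S, (gridCube n ε α ∩ lineThrough n z₀ v).Nonempty := by
  have hw : y - z₀ ≠ 0 := by
    intro h
    have hy0 := Submodule.mem_orthogonal_singleton_iff_inner_left.mp hy
    rw [sub_eq_zero.mp h, real_inner_self_eq_norm_sq, hz] at hy0
    norm_num at hy0
  refine ⟨‖y - z₀‖⁻¹ • (y - z₀), norm_smul_inv_norm hw, fun α hα => ?_⟩
  rw [lineThrough_smul (inv_ne_zero (norm_ne_zero_iff.mpr hw))]
  exact gridCube_inter_lineThrough_nonempty hε hz (hS α hα).1 (hS α hα).2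

/-- Here `9 (n + 1) / ε = 3 / δ` for the cell side `δ = ε / (3 (n + 1))` in `z₀ᗮ`. -/
lemma exists_le_card_filter_near_centralProj {ε : ℝ} (hε : 0 < ε) {z₀ : En n} (hz : ‖z₀‖ = 1)
    {U : Finset (Fin n → ℤ)} (hU : ∀ α ∈ U, gridCube n ε α ⊆ Metric.closedBall 0 (1 / 3))
    {N : ℕ} (hN : (2 * ⌈9 * (n + 1) / ε⌉₊ + 1) ^ (n - 1) * N ≤ U.card) :
    ∃ y ∈ (ℝ ∙ z₀)ᗮ,
      N ≤ (U.filter fun α => ‖y - centralProj z₀ (gridCenter ε α)‖ ≤ 3 * ε / 8).card := by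
  have hn := pos_of_norm_eq_one hz
  have : Fact (finrank ℝ (En n) = n - 1 + 1) := ⟨by rw [finrank_euclideanSpace_fin]; omega⟩
  have hK : finrank ℝ (ℝ ∙ z₀)ᗮ = n - 1 :=
    Submodule.finrank_orthogonal_span_singleton (ne_zero_of_norm_ne_zero (hz.trans_ne one_ne_zero))
  have hball : ∀ α ∈ U, ‖gridCenter ε α‖ ≤ 1 / 3 := fun α hα =>
    mem_closedBall_zero_iff.mp (hU α hα (gridCenter_mem_gridCube hε.le α))
  set δ := ε / (3 * (n + 1)) with hδ
  have hδ₀ : 0 < δ := by positivity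
  have hnδ : (n + 1) * δ = ε / 3 := by rw [hδ]; field_simp
  obtain ⟨y, hyK, hy⟩ := exists_le_card_filter_norm_sub_sq_le (K := (ℝ ∙ z₀)ᗮ) (R := 3)
    (Y := fun α => centralProj z₀ (gridCenter ε α)) hδ₀
    (fun α hα => centralProj_mem_orthogonal hz
      (real_inner_lt_one hz ((hball α hα).trans_lt (by norm_num))).ne)
    (fun α hα => norm_centralProj_le hz (hball α hα))
    (by rwa [hK, show 3 / δ = 9 * (n + 1) / ε by rw [hδ]; field_simp; norm_num])
  refine ⟨y, hyK, hy.trans (Finset.card_le_card (Finset.monotone_filter_right _ fun α _ hα => ?_))⟩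
  have hδε : δ ≤ ε / 3 := by rw [← hnδ]; nlinarith [(n.cast_nonneg : (0 : ℝ) ≤ n)]
  refine le_of_pow_le_pow_left₀ two_ne_zero (by positivity) (hα.trans ?_)
  calc (finrank ℝ (ℝ ∙ z₀)ᗮ : ℝ) * δ ^ 2 ≤ (n + 1) * δ ^ 2 := by
        gcongr
        rw [hK]
        exact_mod_cast (Nat.sub_le n 1).trans n.le_succ
    _ = ε / 3 * δ := by rw [← hnδ]; ring
    _ ≤ ε / 3 * (ε / 3) := by gcongr
    _ ≤ (3 * ε / 8) ^ 2 := by nlinarith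

end Grid

lemma two_mul_natCeil_add_one_le {x : ℝ} (hx : 3 ≤ x) : (2 * ⌈x⌉₊ + 1 : ℝ) ≤ 3 * x := by
  linarith [Nat.ceil_lt_add_one (by linarith : (0 : ℝ) ≤ x)]

theorem stmt16_general (n : ℕ) :
    ∃ θ : ℝ, 0 < θ ∧
      ∀ ε : ℝ, 0 < ε → ε ≤ 1 / (10 * Real.sqrt n) →
        ∀ z₀ ∈ Metric.sphere (0 : En n) 1, ∀ N : ℕ,
          ∀ U : Finset (Fin n → ℤ),
            (∀ α ∈ U, gridCube n ε α ⊆ Metric.closedBall (0 : En n) (1 / 3)) →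
            θ * N * (1 / ε) ^ (n - 1) ≤ (U.card : ℝ) →
            ∃ v : En n, ‖v‖ = 1 ∧
              N ≤ {α : Fin n → ℤ |
                α ∈ U ∧ (gridCube n ε α ∩ lineThrough n z₀ v).Nonempty}.ncard := by
  refine ⟨(27 * (n + 1)) ^ (n - 1), by positivity, ?_⟩
  intro ε hε hεle z₀ hz₀ N U hU hcard
  rw [mem_sphere_zero_iff_norm] at hz₀
  have hsqrt : 1 ≤ Real.sqrt n :=
    Real.one_le_sqrt.mpr (by exact_mod_cast pos_of_norm_eq_one hz₀)
  have hε1 : ε ≤ 1 := hεle.trans <| by rw [div_le_one (by linarith)]; linarith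
  have hx : 3 ≤ 9 * (n + 1) / ε := by
    rw [le_div_iff₀ hε]
    nlinarith [(n.cast_nonneg : (0 : ℝ) ≤ n)]
  obtain ⟨y, hyK, hy⟩ := exists_le_card_filter_near_centralProj hε hz₀ hU (N := N) <| by
    have := calc ((2 * ⌈9 * (n + 1) / ε⌉₊ + 1) ^ (n - 1) * N : ℝ)
        ≤ (3 * (9 * (n + 1) / ε)) ^ (n - 1) * N := by gcongr; exact two_mul_natCeil_add_one_le hx
      _ = (27 * (n + 1)) ^ (n - 1) * N * (1 / ε) ^ (n - 1) := by
          rw [← mul_div_assoc, ← mul_assoc, div_eq_mul_one_div, mul_pow]; ring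
      _ ≤ U.card := hcard
    exact_mod_cast this
  obtain ⟨v, hv, hmeet⟩ := exists_norm_eq_one_forall_gridCube_inter_lineThrough_nonempty hε.le hz₀
    hyK (S := ↑(U.filter _)) fun α hα =>
      ⟨hU α (Finset.mem_filter.mp hα).1, (Finset.mem_filter.mp hα).2⟩
  refine ⟨v, hv, hy.trans ?_⟩
  rw [← Set.ncard_coe_finset]
  exact Set.ncard_le_ncard (fun α hα => ⟨(Finset.mem_filter.mp hα).1, hmeet α hα⟩)
    (U.finite_toSet.subset fun α h => h.1)

/-- there is `θ_n > 0` such that for `0 < ε ≤ 1/(10√n)`, `z₀ ∈ S^{n-1}`,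
`N : ℕ`, and any collection `U` of grid `ε`-cubes inside `B̂^n` with
`|U| ≥ θ_n·N·(1/ε)^{n-1}`, some line through `z₀` meets at least `N` cubes of `U`. -/
theorem stmt16 (n : ℕ) (hn : 2 ≤ n) :
    ∃ θ : ℝ, 0 < θ ∧
      ∀ ε : ℝ, 0 < ε → ε ≤ 1 / (10 * Real.sqrt n) →
        ∀ z₀ ∈ Metric.sphere (0 : En n) 1, ∀ N : ℕ,
          ∀ U : Finset (Fin n → ℤ),
            (∀ α ∈ U, gridCube n ε α ⊆ Metric.closedBall (0 : En n) (1 / 3)) →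
            θ * N * (1 / ε) ^ (n - 1) ≤ (U.card : ℝ) →
            ∃ v : En n, ‖v‖ = 1 ∧
              N ≤ {α : Fin n → ℤ |
                α ∈ U ∧ (gridCube n ε α ∩ lineThrough n z₀ v).Nonempty}.ncard :=
  stmt16_general n
end
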